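/- arXiv:2209.14474 — 4 statements merged into one kernel-verified Lean document; each statement's English description precedes it below -/
import Mathlib

section
/- Let f, g : ℝ → ℝ with g continuously differentiable, f twice continuously differentiable, p a real number with f(p) = 0, f'(p) ≠ 0, and p an isolated zero of f (i.e. there is ε > 0 such that f(x) ≠ 0 for all x with 0 < |x − p| < ε). Assume g(0) = 0 and 0 is an isolated zero of g (i.e. there is ε' > 0 such that g(y) ≠ 0 for all y with 0 < |y| < ε'). Then there exists a neighborhood V of p such that for every x₀ ∈ V, the sequence defined by the g-Steffensen iteration x_{n+1} = x_n − g(f(x_n))·f(x_n) / (f(x_n + g(f(x_n))) − f(x_n)) converges to p. -/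
/-!
Put `h = g (f x)` and write `f (x + h) - f x = s₁ h`, `f x = s₂ (x - p)`. The error of one step
is `(x - p) (1 - s₂ / s₁)`. Strict differentiability of `f` at the simple root `p` puts both
`s₁` and `s₂` within `|f' p| / 5` of `f' p` once `x` and `x + h` are close to `p`, which happens
near `p` since `h → 0`; then `|1 - s₂ / s₁| ≤ (2/5) / (4/5) = 1/2`. For `x ≠ p` we also have
`f x ≠ 0`, hence `h ≠ 0` as `0` is an isolated zero of `g`, so the step is a genuine secant step
and not stalled by `/ 0`. The iterates therefore converge geometrically.
-/

open Filter Topology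

lemma abs_sub_mul_div_le_of_abs_sub_mul_le {c k a d h e : ℝ} (hc : c ≠ 0) (hh : h ≠ 0)
    (hk : k < 1) (hd : |d - c * h| ≤ k * |c| * |h|) (ha : |a - c * e| ≤ k * |c| * |e|) :
    |e - h * a / d| ≤ 2 * k / (1 - k) * |e| := by
  have hch : 0 < |c| * |h| := by positivity
  have hd_lower : (1 - k) * (|c| * |h|) ≤ |d| := by
    have := abs_sub_abs_le_abs_sub (c * h) d
    rw [abs_sub_comm, abs_mul] at this
    nlinarith
  have hd_pos : 0 < |d| := (mul_pos (sub_pos.2 hk) hch).trans_le hd_lower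
  have hnum : |(d - c * h) * e - h * (a - c * e)| ≤ 2 * k * (|c| * |h|) * |e| := by
    calc |(d - c * h) * e - h * (a - c * e)|
        ≤ |d - c * h| * |e| + |h| * |a - c * e| := by
          simpa only [abs_mul] using abs_sub ((d - c * h) * e) (h * (a - c * e))
      _ ≤ k * |c| * |h| * |e| + |h| * (k * |c| * |e|) := by gcongr
      _ = 2 * k * (|c| * |h|) * |e| := by ring
  have hd0 : d ≠ 0 := abs_pos.1 hd_pos
  calc |e - h * a / d| = |(d - c * h) * e - h * (a - c * e)| / |d| := by
        rw [← abs_div]; congr 1; field_simp; ring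
    _ ≤ 2 * k * (|c| * |h|) * |e| / ((1 - k) * (|c| * |h|)) := by
        have hk0 : 0 ≤ k := nonneg_of_mul_nonneg_left
          ((abs_nonneg _).trans (by simpa only [mul_assoc] using hd)) hch
        gcongr
    _ = 2 * k / (1 - k) * |e| := by field_simp

theorem exists_nhds_tendsto_of_eventually_dist_le_mul {X : Type*} [PseudoMetricSpace X]
    {T : X → X} {p : X} {q : ℝ} (hq0 : 0 ≤ q) (hq : q < 1)
    (hT : ∀ᶠ x in 𝓝 p, dist (T x) p ≤ q * dist x p) :
    ∃ V ∈ 𝓝 p, ∀ x₀ ∈ V, ∀ x : ℕ → X, x 0 = x₀ → (∀ n, x (n + 1) = T (x n)) →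
      Tendsto x atTop (𝓝 p) := by
  obtain ⟨δ, hδ, hball⟩ := Metric.eventually_nhds_iff_ball.1 hT
  refine ⟨Metric.ball p δ, Metric.ball_mem_nhds p hδ, ?_⟩
  rintro _ hx₀ x rfl hx
  have hbound : ∀ n, dist (x n) p ≤ q ^ n * dist (x 0) p := by
    intro n
    induction n with
    | zero => simp
    | succ n ih =>
      have hmem : x n ∈ Metric.ball p δ := by
        refine Metric.mem_ball.2 (ih.trans_lt (lt_of_le_of_lt ?_ hx₀))
        exact mul_le_of_le_one_left dist_nonneg (pow_le_one₀ hq0 hq.le)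
      calc dist (x (n + 1)) p = dist (T (x n)) p := by rw [hx]
        _ ≤ q * dist (x n) p := hball _ hmem
        _ ≤ q * (q ^ n * dist (x 0) p) := by gcongr
        _ = q ^ (n + 1) * dist (x 0) p := by ring
  refine tendsto_iff_dist_tendsto_zero.2 (squeeze_zero (fun _ => dist_nonneg) hbound ?_)
  simpa using (tendsto_pow_atTop_nhds_zero_of_lt_one hq0 hq).mul_const (dist (x 0) p)

noncomputable def gSteffensenStep (f g : ℝ → ℝ) (x : ℝ) : ℝ :=
  x - g (f x) * f x / (f (x + g (f x)) - f x)

theorem eventually_dist_gSteffensenStep_le {f g : ℝ → ℝ} {p c : ℝ}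
    (hf : HasStrictDerivAt f c p) (hc : c ≠ 0) (hfp : f p = 0) (hg : Tendsto g (𝓝 0) (𝓝 0))
    (hg_ne : ∀ᶠ y in 𝓝[≠] 0, g y ≠ 0) :
    ∀ᶠ x in 𝓝 p, dist (gSteffensenStep f g x) p ≤ 1 / 2 * dist x p := by
  have hlin := ((hasDerivAtFilter_iff_isLittleO ..).1 hf).bound
    (show 0 < 1 / 5 * |c| by positivity)
  have hf_tendsto : Tendsto f (𝓝 p) (𝓝 0) := hfp ▸ hf.hasDerivAt.continuousAt.tendsto
  have hgf : Tendsto (fun x => g (f x)) (𝓝 p) (𝓝 0) := hg.comp hf_tendsto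
  have hstep : Tendsto (fun x => (x + g (f x), x)) (𝓝 p) (𝓝 (p, p)) := by
    simpa using (tendsto_id.add hgf).prodMk_nhds tendsto_id
  have hroot : Tendsto (fun x => (x, p)) (𝓝 p) (𝓝 (p, p)) :=
    tendsto_id.prodMk_nhds tendsto_const_nhds
  filter_upwards [hstep.eventually hlin, hroot.eventually hlin,
    hf_tendsto.eventually (eventually_nhdsWithin_iff.1 hg_ne)] with x hd ha hgf_ne
  simp only [Real.norm_eq_abs, smul_eq_mul, hfp, sub_zero, add_sub_cancel_left] at hd ha
  rw [Real.dist_eq, Real.dist_eq]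
  rcases eq_or_ne x p with rfl | hxp
  · simp [gSteffensenStep, hfp]
  have hfx : f x ≠ 0 := by
    intro h0
    have hxp' : 0 < |x - p| := abs_pos.2 (sub_ne_zero.2 hxp)
    rw [h0, zero_sub, abs_neg, abs_mul] at ha
    nlinarith [abs_pos.2 hc]
  calc |gSteffensenStep f g x - p|
      = |x - p - g (f x) * f x / (f (x + g (f x)) - f x)| := by
        rw [gSteffensenStep, sub_right_comm]
    _ ≤ 2 * (1 / 5) / (1 - 1 / 5) * |x - p| :=
        abs_sub_mul_div_le_of_abs_sub_mul_le hc (hgf_ne hfx) (by norm_num)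
          (by rwa [mul_comm c]) (by rwa [mul_comm c])
    _ = 1 / 2 * |x - p| := by norm_num

theorem gSteffensen_converges_general (f g : ℝ → ℝ)
    (hg : ContDiff ℝ 1 g) (hf : ContDiff ℝ 2 f)
    (p : ℝ) (hfp : f p = 0) (hfp' : deriv f p ≠ 0)
    (hg0 : g 0 = 0)
    (hgiso : ∃ ε > 0, ∀ y : ℝ, 0 < |y| → |y| < ε → g y ≠ 0) :
    ∃ V ∈ nhds p, ∀ x₀ ∈ V, ∀ x : ℕ → ℝ, x 0 = x₀ →
      (∀ n : ℕ, x (n + 1) =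
        x n - g (f (x n)) * f (x n) / (f (x n + g (f (x n))) - f (x n))) →
      Filter.Tendsto x Filter.atTop (nhds p) := by
  obtain ⟨ε, hε, hgiso⟩ := hgiso
  have hf_strict : HasStrictDerivAt f (deriv f p) p :=
    hf.contDiffAt.hasStrictDerivAt (by norm_num)
  have hg_tendsto : Tendsto g (𝓝 0) (𝓝 0) := by
    simpa only [hg0] using hg.continuous.tendsto 0
  have hg_ne : ∀ᶠ y in 𝓝[≠] 0, g y ≠ 0 := by
    refine eventually_nhdsWithin_iff.2 ?_
    filter_upwards [Metric.ball_mem_nhds (0 : ℝ) hε] with y hy hy0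
    exact hgiso y (abs_pos.2 hy0) (by simpa using hy)
  exact exists_nhds_tendsto_of_eventually_dist_le_mul (by norm_num) (by norm_num)
    (eventually_dist_gSteffensenStep_le hf_strict hfp' hfp hg_tendsto hg_ne)

/-- Convergence of the g-Steffensen method: there is a neighborhood `V` of the
simple root `p` such that any g-Steffensen iteration sequence starting in `V`
converges to `p`.  (In Lean, division by zero yields zero, so the iteration
satisfies the convention `x_{n+1} = x_n` when the denominator vanishes.) -/
theorem gSteffensen_converges (f g : ℝ → ℝ)
    (hg : ContDiff ℝ 1 g) (hf : ContDiff ℝ 2 f)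
    (p : ℝ) (hfp : f p = 0) (hfp' : deriv f p ≠ 0)
    (hfiso : ∃ ε > 0, ∀ x : ℝ, 0 < |x - p| → |x - p| < ε → f x ≠ 0)
    (hg0 : g 0 = 0)
    (hgiso : ∃ ε > 0, ∀ y : ℝ, 0 < |y| → |y| < ε → g y ≠ 0) :
    ∃ V ∈ nhds p, ∀ x₀ ∈ V, ∀ x : ℕ → ℝ, x 0 = x₀ →
      (∀ n : ℕ, x (n + 1) =
        x n - g (f (x n)) * f (x n) / (f (x n + g (f (x n))) - f (x n))) →
      Filter.Tendsto x Filter.atTop (nhds p) :=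
  gSteffensen_converges_general f g hg hf p hfp hfp' hg0 hgiso
end

section
/- Let f, g : ℝ → ℝ with g continuously differentiable, f twice continuously differentiable, p a real number with f(p) = 0, f'(p) ≠ 0, and p an isolated zero of f. Assume g(0) = 0 and 0 is an isolated zero of g. Suppose (x_n) is a sequence following the g-Steffensen iteration x_{n+1} = x_n − g(f(x_n))·f(x_n) / (f(x_n + g(f(x_n))) − f(x_n)) which converges to p and satisfies x_n ≠ p for all n. Then, writing e_n = x_n − p, the limit of e_{n+1}/e_n² as n → ∞ exists and equals (1/f'(p)) · (f''(p)/2 + g'(0)·f'(p)·f''(p)/2); in particular the method converges quadratically. -/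
/-!
Write `e = x - p`, `h = g (f x)` and let `R` be the second-order Taylor remainder of `f` at `p`.
Since `R' t = o(t)`, the mean value theorem gives `R t - R s = o(u (t - s))` whenever
`s, t = O(u)`; as `h / e → g'(0) f'(p)`, so that `h = O(e)`, this yields `R e = o(e²)` and
`R (e + h) - R e = o(e h)`. Substituting the two Taylor expansions into the step and dividing
by `e² h` writes `e_{n+1} / e_n²` as a quotient whose numerator tends to
`f''(p)/2 · (1 + g'(0) f'(p))` and whose denominator tends to `f'(p)`.

The orbit never meets a fixed point of the step map, since it would then be constant with a limit
other than `p`; hence `h ≠ 0` and the secant denominator never vanishes along it.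
-/

open Filter Topology Asymptotics Metric Function

lemma isLittleO_sub_of_hasDerivAt {α : Type*} {r r' : ℝ → ℝ}
    (hr : ∀ t, HasDerivAt r (r' t) t) (hr' : r' =o[𝓝 0] fun t => t)
    {l : Filter α} {s t u : α → ℝ} (hu : Tendsto u l (𝓝 0)) (hs : s =O[l] u)
    (ht : t =O[l] u) :
    (fun i => r (t i) - r (s i)) =o[l] fun i => u i * (t i - s i) := by
  obtain ⟨K, hK, hsK⟩ := hs.exists_pos
  obtain ⟨K', hK', htK⟩ := ht.exists_pos
  obtain ⟨M, hM, hsM, htM⟩ : ∃ M > 0, IsBigOWith M l s u ∧ IsBigOWith M l t u :=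
    ⟨max K K', lt_max_of_lt_left hK, hsK.weaken (le_max_left _ _),
      htK.weaken (le_max_right _ _)⟩
  refine IsLittleO.of_bound fun c hc => ?_
  obtain ⟨δ, hδ, hr'δ⟩ := Metric.eventually_nhds_iff.mp (hr'.def (div_pos hc hM))
  filter_upwards [hsM.bound, htM.bound,
    (tendsto_norm_zero.comp hu).eventually_lt_const (div_pos hδ hM)] with i hsi hti hui
  have hρ : M * ‖u i‖ < δ := by rwa [comp_apply, lt_div_iff₀' hM] at hui
  have hbound : ∀ v ∈ closedBall (0 : ℝ) (M * ‖u i‖), ‖r' v‖ ≤ c * ‖u i‖ := by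
    intro v hv
    rw [mem_closedBall_zero_iff] at hv
    calc ‖r' v‖ ≤ c / M * ‖v‖ := hr'δ (by simpa using hv.trans_lt hρ)
      _ ≤ c / M * (M * ‖u i‖) := by gcongr
      _ = c * ‖u i‖ := by field_simp
  have hmvt := (convex_closedBall 0 _).norm_image_sub_le_of_norm_hasDerivWithin_le
    (fun v _ => (hr v).hasDerivWithinAt) hbound
    (mem_closedBall_zero_iff.mpr hsi) (mem_closedBall_zero_iff.mpr hti)
  rwa [norm_mul, ← mul_assoc]

lemma not_isFixedPt_of_tendsto {X : Type*} [TopologicalSpace X] [T2Space X] {Φ : X → X}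
    {x : ℕ → X} {p : X} (hx : ∀ n, x (n + 1) = Φ (x n)) (hconv : Tendsto x atTop (𝓝 p))
    (hne : ∀ n, x n ≠ p) (n : ℕ) : ¬ IsFixedPt Φ (x n) := by
  intro hfix
  have hconst : ∀ m ≥ n, x m = x n :=
    Nat.le_induction rfl fun m _ ih => by rw [hx, ih, hfix.eq]
  exact hne n (tendsto_nhds_unique (tendsto_atTop_of_eventually_const hconst) hconv)

noncomputable def secondOrderRemainder (f : ℝ → ℝ) (p t : ℝ) : ℝ :=
  f (p + t) - f p - deriv f p * t - deriv (deriv f) p / 2 * t ^ 2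

section SecondOrderRemainder

variable {f : ℝ → ℝ} {p : ℝ}

lemma hasDerivAt_secondOrderRemainder (hf : Differentiable ℝ f) (t : ℝ) :
    HasDerivAt (secondOrderRemainder f p)
      (deriv f (p + t) - deriv f p - deriv (deriv f) p * t) t := by
  have hshift : HasDerivAt (fun u => f (p + u)) (deriv f (p + t)) t :=
    (hf (p + t)).hasDerivAt.comp_const_add p t
  refine (((hshift.sub_const (f p)).sub ((hasDerivAt_id t).const_mul (deriv f p))).sub
    ((hasDerivAt_pow 2 t).const_mul (deriv (deriv f) p / 2))).congr_deriv ?_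
  push_cast
  ring

lemma isLittleO_deriv_secondOrderRemainder (hf' : DifferentiableAt ℝ (deriv f) p) :
    (fun t => deriv f (p + t) - deriv f p - deriv (deriv f) p * t) =o[𝓝 0] fun t => t := by
  simpa [mul_comm] using hasDerivAt_iff_isLittleO_nhds_zero.mp hf'.hasDerivAt

lemma secondOrderRemainder_zero : secondOrderRemainder f p 0 = 0 := by
  simp [secondOrderRemainder]

lemma isLittleO_secondOrderRemainder_sub {α : Type*} (hf : Differentiable ℝ f)
    (hf' : DifferentiableAt ℝ (deriv f) p) {l : Filter α} {s t u : α → ℝ}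
    (hu : Tendsto u l (𝓝 0)) (hs : s =O[l] u) (ht : t =O[l] u) :
    (fun i => secondOrderRemainder f p (t i) - secondOrderRemainder f p (s i)) =o[l]
      fun i => u i * (t i - s i) :=
  isLittleO_sub_of_hasDerivAt (hasDerivAt_secondOrderRemainder hf)
    (isLittleO_deriv_secondOrderRemainder hf') hu hs ht

end SecondOrderRemainder

lemma secant_step_error_div_sq {a b e h F₀ F₁ R₀ R₁ : ℝ} (he : e ≠ 0) (hh : h ≠ 0)
    (hD : F₁ - F₀ ≠ 0) (hF₀ : F₀ = a * e + b * e ^ 2 + R₀)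
    (hF₁ : F₁ = a * (e + h) + b * (e + h) ^ 2 + R₁) :
    (e - h * F₀ / (F₁ - F₀)) / e ^ 2 =
      (b + b * (h / e) + (R₁ - R₀) / (e * h) - R₀ / e ^ 2) /
        (a + b * (2 * e + h) + (R₁ - R₀) / (e * h) * e) := by
  have hD' : a + b * (2 * e + h) + (R₁ - R₀) / (e * h) * e = (F₁ - F₀) / h := by
    rw [hF₀, hF₁]; field_simp; ring
  rw [hD', eq_div_iff (div_ne_zero hD hh)]
  field_simp
  subst hF₀ hF₁
  ring

lemma tendsto_secant_step_error_div_sq {α : Type*} {l : Filter α} {f : ℝ → ℝ} {p k : ℝ}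
    (hf : Differentiable ℝ f) (hf' : DifferentiableAt ℝ (deriv f) p) (hfp : f p = 0)
    (hfp' : deriv f p ≠ 0) {y h : α → ℝ} (hy : Tendsto y l (𝓝 p))
    (hyp : ∀ᶠ i in l, y i ≠ p) (hh : ∀ᶠ i in l, h i ≠ 0) (hD : ∀ᶠ i in l, f (y i + h i) - f (y i) ≠ 0)
    (hk : Tendsto (fun i => h i / (y i - p)) l (𝓝 k)) :
    Tendsto (fun i => (y i - h i * f (y i) / (f (y i + h i) - f (y i)) - p) / (y i - p) ^ 2) l
      (𝓝 (deriv (deriv f) p / 2 * (1 + k) / deriv f p)) := by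
  set a := deriv f p
  set b := deriv (deriv f) p / 2
  set R := secondOrderRemainder f p
  set e := fun i => y i - p
  have hTaylor : ∀ z, f (p + z) = a * z + b * z ^ 2 + R z := fun z => by
    simp only [R, secondOrderRemainder, hfp]
    ring
  have he : Tendsto e l (𝓝 0) := by simpa using hy.sub_const p
  have hhe : h =O[l] e :=
    isBigO_of_div_tendsto_nhds (hyp.mono fun i hi hei => absurd (sub_eq_zero.mp hei) hi) k hk
  have hC : Tendsto (fun i => R (e i) / e i ^ 2) l (𝓝 0) := by
    simpa [R, secondOrderRemainder_zero, sq] using (isLittleO_secondOrderRemainder_sub hf hf' he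
      (isBigO_zero _ _) (isBigO_refl _ _)).tendsto_div_nhds_zero
  have hE : Tendsto (fun i => (R (e i + h i) - R (e i)) / (e i * h i)) l (𝓝 0) := by
    simpa using (isLittleO_secondOrderRemainder_sub hf hf' he (isBigO_refl _ _)
      ((isBigO_refl _ _).add hhe)).tendsto_div_nhds_zero
  have hnum : Tendsto (fun i => b + b * (h i / e i) + (R (e i + h i) - R (e i)) / (e i * h i)
      - R (e i) / e i ^ 2) l (𝓝 (b + b * k + 0 - 0)) :=
    ((tendsto_const_nhds.add (tendsto_const_nhds.mul hk)).add hE).sub hC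
  have hden : Tendsto (fun i => a + b * (2 * e i + h i)
      + (R (e i + h i) - R (e i)) / (e i * h i) * e i) l (𝓝 (a + b * (2 * 0 + 0) + 0 * 0)) :=
    (tendsto_const_nhds.add (tendsto_const_nhds.mul
      ((he.const_mul 2).add (hhe.trans_tendsto he)))).add (hE.mul he)
  convert (hnum.div hden (by simpa using hfp')).congr' ?_ using 2
  · ring
  filter_upwards [hyp, hh, hD] with i hyi hhi hDi
  rw [sub_right_comm]
  refine (secant_step_error_div_sq (sub_ne_zero.mpr hyi) hhi hDi ?_ ?_).symm
  · rw [← hTaylor]; congr 1; ring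
  · rw [← hTaylor]; congr 1; ring

theorem gSteffensen_quadratic_general (f g : ℝ → ℝ)
    (hg : ContDiff ℝ 1 g) (hf : ContDiff ℝ 2 f)
    (p : ℝ) (hfp : f p = 0) (hfp' : deriv f p ≠ 0)
    (hg0 : g 0 = 0)
    (x : ℕ → ℝ)
    (hiter : ∀ n : ℕ, x (n + 1) =
      x n - g (f (x n)) * f (x n) / (f (x n + g (f (x n))) - f (x n)))
    (hconv : Filter.Tendsto x Filter.atTop (nhds p))
    (hne : ∀ n : ℕ, x n ≠ p) :
    Filter.Tendsto (fun n : ℕ => (x (n + 1) - p) / (x n - p) ^ 2)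
      Filter.atTop
      (nhds ((1 / deriv f p) *
        (deriv (deriv f) p / 2 + deriv g 0 * deriv f p * (deriv (deriv f) p / 2)))) := by
  have hfd : Differentiable ℝ f := hf.differentiable (by norm_num)
  have hf'd : Differentiable ℝ (deriv f) := (hf.deriv' (n := 1)).differentiable one_ne_zero
  have hgf : HasDerivAt (fun y => g (f y)) (deriv g 0 * deriv f p) p := by
    have hg' : HasDerivAt g (deriv g 0) (f p) :=
      hfp ▸ (hg.differentiable one_ne_zero 0).hasDerivAt
    exact hg'.comp p (hfd p).hasDerivAt
  have hstep : ∀ n, g (f (x n)) ≠ 0 ∧ f (x n + g (f (x n))) - f (x n) ≠ 0 := fun n => by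
    have := not_isFixedPt_of_tendsto
      (Φ := fun y => y - g (f y) * f y / (f (y + g (f y)) - f y)) hiter hconv hne n
    simp only [IsFixedPt, sub_eq_self, div_eq_zero_iff, mul_eq_zero, not_or] at this
    exact ⟨this.1.1, this.2⟩
  have hslope :
      Tendsto (fun n => g (f (x n)) / (x n - p)) atTop (𝓝 (deriv g 0 * deriv f p)) := by
    have := (hasDerivAt_iff_tendsto_slope.mp hgf).comp
      (tendsto_nhdsWithin_iff.mpr ⟨hconv, Eventually.of_forall hne⟩)
    simpa [comp_def, slope_def_field, hfp, hg0] using this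
  convert tendsto_secant_step_error_div_sq hfd (hf'd p) hfp hfp' hconv (Eventually.of_forall hne)
    (Eventually.of_forall fun n => (hstep n).1) (Eventually.of_forall fun n => (hstep n).2)
    hslope using 2 with n
  · rw [hiter]
  · field_simp

/-- Quadratic convergence of the g-Steffensen method: if the iteration sequence
converges to the simple root `p` and never hits `p`, then with `e n = x n - p`
the quotients `e (n+1) / (e n)^2` converge to
`(1 / f'(p)) * (f''(p)/2 + g'(0) * f'(p) * f''(p)/2)`. -/
theorem gSteffensen_quadratic (f g : ℝ → ℝ)
    (hg : ContDiff ℝ 1 g) (hf : ContDiff ℝ 2 f)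
    (p : ℝ) (hfp : f p = 0) (hfp' : deriv f p ≠ 0)
    (hfiso : ∃ ε > 0, ∀ x : ℝ, 0 < |x - p| → |x - p| < ε → f x ≠ 0)
    (hg0 : g 0 = 0)
    (hgiso : ∃ ε > 0, ∀ y : ℝ, 0 < |y| → |y| < ε → g y ≠ 0)
    (x : ℕ → ℝ)
    (hiter : ∀ n : ℕ, x (n + 1) =
      x n - g (f (x n)) * f (x n) / (f (x n + g (f (x n))) - f (x n)))
    (hconv : Filter.Tendsto x Filter.atTop (nhds p))
    (hne : ∀ n : ℕ, x n ≠ p) :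
    Filter.Tendsto (fun n : ℕ => (x (n + 1) - p) / (x n - p) ^ 2)
      Filter.atTop
      (nhds ((1 / deriv f p) *
        (deriv (deriv f) p / 2 + deriv g 0 * deriv f p * (deriv (deriv f) p / 2)))) :=
  gSteffensen_quadratic_general f g hg hf p hfp hfp' hg0 x hiter hconv hne
end

section
/- Let f, g : ℝ → ℝ with g continuously differentiable, f twice continuously differentiable, p a real number with f(p) = 0, f'(p) ≠ 0, and p an isolated zero of f. Assume g(0) = 0 and 0 is an isolated zero of g. Define ρ(x) = (f(x + g(f(x))) − f(x)) / g(f(x)) for x ≠ p near p, and ρ(p) = f'(p). Then ρ is continuous at p; that is, (f(x + g(f(x))) − f(x)) / g(f(x)) tends to f'(p) as x tends to p with x ≠ p. -/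
/-!
Since `f` is `C¹`, it is strictly differentiable at `p`: the difference quotient
`(f u - f v) / (u - v)` tends to `f'(p)` as `(u, v) → (p, p)` with `u ≠ v`, and not only for
`v = p`. Take `u = x + g (f x)` and `v = x`. Near `p` we have `f x ≠ 0` because `f'(p) ≠ 0`,
hence `g (f x) ≠ 0` because `f x → 0` and `0` is an isolated zero of `g`.
-/

open Filter Topology

theorem HasStrictDerivAt.tendsto_div_sub {𝕜 α : Type*} [NontriviallyNormedField 𝕜]
    {f : 𝕜 → 𝕜} {f' p : 𝕜} {l : Filter α} {u v : α → 𝕜} (hf : HasStrictDerivAt f f' p)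
    (hu : Tendsto u l (𝓝 p)) (hv : Tendsto v l (𝓝 p)) (huv : ∀ᶠ x in l, u x ≠ v x) :
    Tendsto (fun x => (f (u x) - f (v x)) / (u x - v x)) l (𝓝 f') := by
  have hremainder := (hf.isLittleO.comp_tendsto (hu.prodMk_nhds hv)).tendsto_div_nhds_zero
  have := hremainder.add_const f'
  rw [zero_add] at this
  refine this.congr' ?_
  filter_upwards [huv] with x hx
  simp only [Function.comp_apply, ContinuousLinearMap.toSpanSingleton_apply, smul_eq_mul]
  field_simp
  ring

theorem Real.eventually_nhdsNE_of_abs_sub_lt {P : ℝ → Prop} {a : ℝ}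
    (h : ∃ ε > 0, ∀ y : ℝ, 0 < |y - a| → |y - a| < ε → P y) : ∀ᶠ y in 𝓝[≠] a, P y := by
  obtain ⟨ε, hε, hP⟩ := h
  rw [eventually_nhdsWithin_iff, Metric.eventually_nhds_iff]
  exact ⟨ε, hε, fun y hy hya => hP y (abs_pos.2 (sub_ne_zero.2 hya)) hy⟩

theorem gSteffensen_rho_continuous_general (f g : ℝ → ℝ)
    (hg : ContDiff ℝ 1 g) (hf : ContDiff ℝ 2 f)
    (p : ℝ) (hfp : f p = 0) (hfp' : deriv f p ≠ 0)
    (hg0 : g 0 = 0)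
    (hgiso : ∃ ε > 0, ∀ y : ℝ, 0 < |y| → |y| < ε → g y ≠ 0) :
    Filter.Tendsto (fun x : ℝ => (f (x + g (f x)) - f x) / g (f x))
      (nhdsWithin p {p}ᶜ) (nhds (deriv f p)) := by
  have hstrict : HasStrictDerivAt f (deriv f p) p :=
    hf.contDiffAt.hasStrictDerivAt (by norm_num)
  have hf_punctured : Tendsto f (𝓝[≠] p) (𝓝[≠] 0) := by
    refine tendsto_nhdsWithin_of_tendsto_nhds_of_eventually_within _ ?_ ?_
    · exact hfp ▸ hf.continuous.continuousAt.tendsto.mono_left nhdsWithin_le_nhds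
    · simpa [hfp] using hstrict.hasDerivAt.eventually_ne hfp'
  have hg_ne : ∀ᶠ y in 𝓝[≠] (0 : ℝ), g y ≠ 0 :=
    Real.eventually_nhdsNE_of_abs_sub_lt (by simpa only [sub_zero] using hgiso)
  have hstep_ne : ∀ᶠ x in 𝓝[≠] p, x + g (f x) ≠ x :=
    (hf_punctured.eventually hg_ne).mono fun x hx => by simpa using hx
  have hstep : Tendsto (fun x => x + g (f x)) (𝓝[≠] p) (𝓝 p) := by
    have hcont : Continuous fun x => x + g (f x) := by fun_prop
    exact (hcont.tendsto' p p (by rw [hfp, hg0, add_zero])).mono_left nhdsWithin_le_nhds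
  simpa only [id, add_sub_cancel_left] using
    hstrict.tendsto_div_sub hstep (tendsto_id.mono_left nhdsWithin_le_nhds) hstep_ne

/-- Continuity of the divided-difference function of the g-Steffensen method at
the root: `(f (x + g (f x)) - f x) / g (f x) → f'(p)` as `x → p`, `x ≠ p`. -/
theorem gSteffensen_rho_continuous (f g : ℝ → ℝ)
    (hg : ContDiff ℝ 1 g) (hf : ContDiff ℝ 2 f)
    (p : ℝ) (hfp : f p = 0) (hfp' : deriv f p ≠ 0)
    (hfiso : ∃ ε > 0, ∀ x : ℝ, 0 < |x - p| → |x - p| < ε → f x ≠ 0)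
    (hg0 : g 0 = 0)
    (hgiso : ∃ ε > 0, ∀ y : ℝ, 0 < |y| → |y| < ε → g y ≠ 0) :
    Filter.Tendsto (fun x : ℝ => (f (x + g (f x)) - f x) / g (f x))
      (nhdsWithin p {p}ᶜ) (nhds (deriv f p)) :=
  gSteffensen_rho_continuous_general f g hg hf p hfp hfp' hg0 hgiso
end

section
/- Let f, g : ℝ → ℝ with g continuously differentiable, f twice continuously differentiable, p a real number with f(p) = 0, f'(p) ≠ 0, and p an isolated zero of f. Assume g(0) = 0 and 0 is an isolated zero of g. Define ρ(x) = (f(x + g(f(x))) − f(x)) / g(f(x)) for x ≠ p near p. Then the derivative ρ'(x) exists for x ≠ p sufficiently close to p, and ρ'(x) tends to f''(p) + (1/2)·f''(p)·g'(0)·f'(p) as x tends to p with x ≠ p. -/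
/-!
Writing `h = g ∘ f`, the fundamental theorem of calculus gives
`ρ x = ∫₀¹ f'(x + t h(x)) dt` wherever `h x ≠ 0`, i.e. on a punctured neighbourhood of `p`.
The right-hand side is defined and differentiable everywhere, with derivative
`∫₀¹ f''(x + t h(x)) (1 + t h'(x)) dt`, which is continuous in `x`; since `h p = 0` and
`h'(p) = g'(0) f'(p)`, its value at `p` is `f''(p) (1 + g'(0) f'(p) / 2)`.
-/

open Filter Topology MeasureTheory intervalIntegral

theorem eventually_nhdsNE_iff_abs_sub {P : ℝ → Prop} {p : ℝ} :
    (∀ᶠ x in 𝓝[≠] p, P x) ↔ ∃ ε > 0, ∀ x : ℝ, 0 < |x - p| → |x - p| < ε → P x := by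
  simp only [eventually_nhdsWithin_iff, Metric.eventually_nhds_iff, Real.dist_eq,
    Set.mem_compl_singleton_iff, abs_pos, sub_ne_zero]
  exact exists_congr fun ε => and_congr_right fun _ =>
    ⟨fun h x hx hxε => h hxε hx, fun h x hxε hx => h x hx hxε⟩

theorem hasDerivAt_intervalIntegral_of_continuous_uncurry
    {E : Type*} [NormedAddCommGroup E] [NormedSpace ℝ E] [CompleteSpace E]
    {F F' : ℝ → ℝ → E} (hF : Continuous F.uncurry) (hF' : Continuous F'.uncurry)
    (hderiv : ∀ x t, HasDerivAt (fun y => F y t) (F' x t) x) (a b x₀ : ℝ) :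
    HasDerivAt (fun x => ∫ t in a..b, F x t) (∫ t in a..b, F' x₀ t) x₀ := by
  obtain ⟨M, hM⟩ := ((isCompact_closedBall x₀ 1).prod isCompact_uIcc).exists_bound_of_continuousOn
      (hF'.continuousOn (s := Metric.closedBall x₀ 1 ×ˢ Set.uIcc a b))
  refine (intervalIntegral.hasDerivAt_integral_of_dominated_loc_of_deriv_le
    (bound := fun _ => M) (Metric.ball_mem_nhds x₀ one_pos)
    (Eventually.of_forall fun x => (hF.comp (Continuous.prodMk_right x)).aestronglyMeasurable)
    ((hF.comp (Continuous.prodMk_right x₀)).intervalIntegrable a b)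
    (hF'.comp (Continuous.prodMk_right x₀)).aestronglyMeasurable
    (ae_of_all _ fun t ht x hx =>
      hM (x, t) ⟨Metric.ball_subset_closedBall hx, Set.uIoc_subset_uIcc ht⟩)
    intervalIntegrable_const (ae_of_all _ fun t _ x _ => hderiv x t)).2

theorem sub_div_eq_integral_deriv {f : ℝ → ℝ} (hf : ContDiff ℝ 1 f) (x : ℝ) {δ : ℝ} (hδ : δ ≠ 0) :
    (f (x + δ) - f x) / δ = ∫ t in (0 : ℝ)..1, deriv f (x + t * δ) := by
  have hfd : Differentiable ℝ f := hf.differentiable one_ne_zero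
  simp_rw [add_comm x, mul_comm _ δ]
  rw [integral_comp_mul_add (deriv f) hδ, integral_deriv_eq_sub (fun y _ => hfd y)
    ((hf.continuous_deriv le_rfl).intervalIntegrable _ _)]
  simp [field]

theorem hasDerivAt_integral_comp_add_mul {k h : ℝ → ℝ} (hk : ContDiff ℝ 1 k) (hh : ContDiff ℝ 1 h)
    (a b x : ℝ) :
    HasDerivAt (fun x => ∫ t in a..b, k (x + t * h x))
      (∫ t in a..b, deriv k (x + t * h x) * (1 + t * deriv h x)) x := by
  have hkd := hk.differentiable one_ne_zero
  have hhd := hh.differentiable one_ne_zero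
  refine hasDerivAt_intervalIntegral_of_continuous_uncurry
    (F := fun x t => k (x + t * h x))
    (F' := fun x t => deriv k (x + t * h x) * (1 + t * deriv h x))
    (by fun_prop) ?_ (fun x t => ?_) a b x
  · have := hk.continuous_deriv le_rfl
    have := hh.continuous_deriv le_rfl
    fun_prop
  · exact (hkd _).hasDerivAt.comp x ((hasDerivAt_id' x).add ((hhd x).hasDerivAt.const_mul t))

theorem integral_zero_one_mul_one_add_mul (c d : ℝ) :
    ∫ t in (0 : ℝ)..1, c * (1 + t * d) = c + 1 / 2 * c * d := by
  have hlin : ∀ t : ℝ, c * (1 + t * d) = c + c * d * t := fun t => by ring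
  simp_rw [hlin]
  rw [integral_add intervalIntegrable_const
      ((by fun_prop : Continuous fun t : ℝ => c * d * t).intervalIntegrable _ _),
    intervalIntegral.integral_const_mul, integral_id]
  simp
  ring

theorem gSteffensen_rho_deriv_tendsto_general (f g : ℝ → ℝ)
    (hg : ContDiff ℝ 1 g) (hf : ContDiff ℝ 2 f)
    (p : ℝ) (hfp : f p = 0)
    (hfiso : ∃ ε > 0, ∀ x : ℝ, 0 < |x - p| → |x - p| < ε → f x ≠ 0)
    (hg0 : g 0 = 0)
    (hgiso : ∃ ε > 0, ∀ y : ℝ, 0 < |y| → |y| < ε → g y ≠ 0) :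
    (∃ ε > 0, ∀ x : ℝ, 0 < |x - p| → |x - p| < ε →
      DifferentiableAt ℝ (fun x : ℝ => (f (x + g (f x)) - f x) / g (f x)) x) ∧
    Filter.Tendsto (deriv (fun x : ℝ => (f (x + g (f x)) - f x) / g (f x)))
      (nhdsWithin p {p}ᶜ)
      (nhds (deriv (deriv f) p +
        (1 / 2) * deriv (deriv f) p * deriv g 0 * deriv f p)) := by
  have hf' : ContDiff ℝ 1 (deriv f) := hf.deriv'
  have hgf : ContDiff ℝ 1 (fun x => g (f x)) := hg.comp (hf.of_le one_le_two)
  set ψ := fun x => ∫ t in (0 : ℝ)..1,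
    deriv (deriv f) (x + t * g (f x)) * (1 + t * deriv (fun x => g (f x)) x)
  have hφ := hasDerivAt_integral_comp_add_mul hf' hgf 0 1
  have hψ : Continuous ψ := by
    have := hf'.continuous_deriv le_rfl
    have := hgf.continuous_deriv le_rfl
    exact continuous_parametric_intervalIntegral_of_continuous' (by fun_prop) 0 1
  have hψp : ψ p = deriv (deriv f) p + 1 / 2 * deriv (deriv f) p * deriv g 0 * deriv f p := by
    have hd : deriv (fun x => g (f x)) p = deriv g 0 * deriv f p := by
      rw [← hfp]
      exact deriv_comp p (hg.differentiable one_ne_zero _) (hf.differentiable two_ne_zero _)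
    simp only [ψ, hfp, hg0, mul_zero, add_zero, hd, integral_zero_one_mul_one_add_mul]
    ring
  have hne : ∀ᶠ x in 𝓝[≠] p, g (f x) ≠ 0 := by
    have hf0 : Tendsto f (𝓝[≠] p) (𝓝[≠] 0) :=
      tendsto_nhdsWithin_of_tendsto_nhds_of_eventually_within _
        (hfp ▸ (hf.continuous.tendsto p).mono_left nhdsWithin_le_nhds)
        (eventually_nhdsNE_iff_abs_sub.mpr hfiso)
    exact hf0.eventually (eventually_nhdsNE_iff_abs_sub.mpr (by simpa using hgiso))
  have hρ : ∀ᶠ x in 𝓝[≠] p, (fun x => (f (x + g (f x)) - f x) / g (f x)) =ᶠ[𝓝 x]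
      fun x => ∫ t in (0 : ℝ)..1, deriv f (x + t * g (f x)) :=
    eventually_nhdsNE_eventually_nhds_iff.mpr hne |>.mono fun _ hx =>
      hx.mono fun y hy => sub_div_eq_integral_deriv (hf.of_le one_le_two) y hy
  refine ⟨eventually_nhdsNE_iff_abs_sub.mp
    (hρ.mono fun x hx => (hφ x).differentiableAt.congr_of_eventuallyEq hx), ?_⟩
  rw [← hψp]
  exact ((hψ.tendsto p).mono_left nhdsWithin_le_nhds).congr'
    (hρ.mono fun x hx => ((hx.deriv_eq).trans (hφ x).deriv).symm)

/-- The divided-difference function `ρ(x) = (f (x + g (f x)) - f x) / g (f x)` is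
differentiable at every `x ≠ p` sufficiently close to `p`, and its derivative
tends to `f''(p) + (1/2) f''(p) g'(0) f'(p)` as `x → p`, `x ≠ p`. -/
theorem gSteffensen_rho_deriv_tendsto (f g : ℝ → ℝ)
    (hg : ContDiff ℝ 1 g) (hf : ContDiff ℝ 2 f)
    (p : ℝ) (hfp : f p = 0) (hfp' : deriv f p ≠ 0)
    (hfiso : ∃ ε > 0, ∀ x : ℝ, 0 < |x - p| → |x - p| < ε → f x ≠ 0)
    (hg0 : g 0 = 0)
    (hgiso : ∃ ε > 0, ∀ y : ℝ, 0 < |y| → |y| < ε → g y ≠ 0) :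
    (∃ ε > 0, ∀ x : ℝ, 0 < |x - p| → |x - p| < ε →
      DifferentiableAt ℝ (fun x : ℝ => (f (x + g (f x)) - f x) / g (f x)) x) ∧
    Filter.Tendsto (deriv (fun x : ℝ => (f (x + g (f x)) - f x) / g (f x)))
      (nhdsWithin p {p}ᶜ)
      (nhds (deriv (deriv f) p +
        (1 / 2) * deriv (deriv f) p * deriv g 0 * deriv f p)) :=
  gSteffensen_rho_deriv_tendsto_general f g hg hf p hfp hfiso hg0 hgiso
end
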